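/- arXiv:1911.09157 — 4 statements merged into one kernel-verified Lean document; each statement's English description precedes it below -/
import Mathlib

section
/- Let p ∈ (0,1) and q̂ > 0. Let K ≥ 1 be such that e^{−q̂ Σ_{k=1}^{n−1}(k+1)^{−p}} ≤ n^{−p} for all n ≥ K, and set C := max_{1 ≤ i ≤ K} i^p e^{−q̂ Σ_{k=1}^{i−1}(k+1)^{−p}}. Then for all n ≥ 1 the sequence c_n := Σ_{i=0}^{n−1} (i+1)^{−2p} e^{−2q̂ Σ_{k=i+1}^{n−1}(k+1)^{−p}} satisfies c_n ≤ (C e^{q̂}/q̂) n^{−p}. -/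
/-!
Let `f m = m ^ p * exp (-q̂ * ∑_{k=1}^{m-1} (k+1)^(-p))` (`decayProfile`). The `i`-th summand
of `c_n` is `x_i ^ 2` with `x_i = (i+1)^(-p) * exp (-q̂ * ∑_{k=i+1}^{n-1} (k+1)^(-p)) = n^(-p) * f n / f (i+1)`.
The sign of `log f (l+1) - log f l` is that of `p (log (l+1) - log l) (l+1)^p - q̂`, which is
antitone in `l`, so `f` first rises and then falls. Since `f 1 = 1` and `f ≤ C` everywhere (by the
choice of `K` and `C`), this gives `f n ≤ C f m` for `m ≤ n`, i.e. `x_i ≤ C n^(-p)`. Finally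
`∑ x_i ≤ e^q̂ / q̂`, because `x_i` is at most `e^q̂ / q̂` times the increment of the telescoping
sequence `j ↦ exp (-q̂ * ∑_{k=j}^{n-1} (k+1)^(-p))`.
-/

open Real Finset

theorem le_or_le_of_ascents_downward_closed {α : Type*} [LinearOrder α] {u : ℕ → α}
    {a m n : ℕ}
    (hu : ∀ l j, a ≤ l → l ≤ j → u j ≤ u (j + 1) → u l ≤ u (l + 1))
    (ham : a ≤ m) (hmn : m ≤ n) : u n ≤ u m ∨ u a ≤ u m := by
  by_cases hasc : ∃ j, m ≤ j ∧ j < n ∧ u j ≤ u (j + 1)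
  · obtain ⟨j, hmj, -, hj⟩ := hasc
    right
    clear hmn
    induction m, ham using Nat.le_induction with
    | base => exact le_rfl
    | succ l hal ih => exact (ih (by omega)).trans (hu l j hal (by omega) hj)
  · push Not at hasc
    left
    induction n, hmn using Nat.le_induction with
    | base => exact le_rfl
    | succ l hml ih =>
      exact (hasc l hml (by omega)).le.trans (ih fun j hmj hjl => hasc j hmj (by omega))

theorem antitoneOn_log_sub_log_mul_rpow {p : ℝ} (hp : p ≤ 1) :
    AntitoneOn (fun x : ℝ => (log (x + 1) - log x) * (x + 1) ^ p) (Set.Ioi 0) := by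
  have hderiv : ∀ x ∈ Set.Ioi (0 : ℝ),
      HasDerivAt (fun x : ℝ => (log (x + 1) - log x) * (x + 1) ^ p)
      ((x + 1) ^ (p - 1) * (p * (log (x + 1) - log x) - x⁻¹)) x := by
    intro x (hx : 0 < x)
    have hx1 : HasDerivAt (fun x : ℝ => x + 1) 1 x := (hasDerivAt_id x).add_const 1
    refine (((hx1.log (by positivity)).sub (hasDerivAt_log hx.ne')).mul
      (hx1.rpow_const (p := p) (Or.inl (by positivity)))).congr_deriv ?_
    rw [show (x + 1) ^ p = (x + 1) ^ (p - 1) * (x + 1) by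
      rw [← rpow_add_one (by positivity)]; ring_nf]
    simp only [Pi.sub_apply]
    field_simp
    ring
  refine antitoneOn_of_hasDerivWithinAt_nonpos (convex_Ioi 0)
    (fun x hx => (hderiv x hx).continuousAt.continuousWithinAt)
    (fun x hx => (hderiv x (by simpa using hx)).hasDerivWithinAt) fun x hx => ?_
  have hx : (0 : ℝ) < x := by simpa using hx
  have hlog_nonneg : 0 ≤ log (x + 1) - log x :=
    sub_nonneg.2 (log_le_log hx (by linarith))
  have hlog_le : log (x + 1) - log x ≤ x⁻¹ := by
    have := log_le_sub_one_of_pos (x := (x + 1) / x) (by positivity)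
    rw [log_div (by positivity) hx.ne', add_div, div_self hx.ne', one_div] at this
    linarith
  have : p * (log (x + 1) - log x) - x⁻¹ ≤ 0 := by nlinarith
  exact mul_nonpos_of_nonneg_of_nonpos (by positivity) this

theorem Nat.Icc_sub_one_eq_Ico {a : ℕ} (ha : 0 < a) (b : ℕ) : Icc a (b - 1) = Ico a b := by
  ext; simp only [mem_Icc, mem_Ico]; omega

noncomputable def decayProfile (p q : ℝ) (m : ℕ) : ℝ :=
  (m : ℝ) ^ p * exp (-q * ∑ k ∈ Ico 1 m, ((k : ℝ) + 1) ^ (-p))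

section DecayProfile

variable {p q : ℝ}

theorem decayProfile_one : decayProfile p q 1 = 1 := by
  simp [decayProfile]

theorem decayProfile_pos {m : ℕ} (hm : 0 < m) : 0 < decayProfile p q m := by
  unfold decayProfile; positivity

theorem log_decayProfile {m : ℕ} (hm : 0 < m) :
    log (decayProfile p q m) = p * log m - q * ∑ k ∈ Ico 1 m, ((k : ℝ) + 1) ^ (-p) := by
  rw [decayProfile, log_mul (by positivity) (exp_pos _).ne', log_rpow (by positivity), log_exp]
  ring

theorem decayProfile_le_succ_iff {l : ℕ} (hl : 0 < l) :
    decayProfile p q l ≤ decayProfile p q (l + 1) ↔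
      q ≤ p * ((log (l + 1) - log l) * ((l : ℝ) + 1) ^ p) := by
  have hl1 : (0 : ℝ) < (l : ℝ) + 1 := by positivity
  have hba : ((l : ℝ) + 1) ^ (-p) * ((l : ℝ) + 1) ^ p = 1 := by
    rw [← rpow_add hl1]; simp
  rw [← log_le_log_iff (decayProfile_pos hl) (decayProfile_pos l.succ_pos), log_decayProfile hl,
    log_decayProfile l.succ_pos, sum_Ico_succ_top hl]
  push_cast
  constructor
  · intro h; linear_combination ((l : ℝ) + 1) ^ p * h - q * hba
  · intro h; linear_combination ((l : ℝ) + 1) ^ (-p) * h + p * (log (l + 1) - log l) * hba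

theorem decayProfile_le_succ_of_le (hp0 : 0 ≤ p) (hp1 : p ≤ 1) {l j : ℕ} (hl : 0 < l)
    (hlj : l ≤ j) (hj : decayProfile p q j ≤ decayProfile p q (j + 1)) :
    decayProfile p q l ≤ decayProfile p q (l + 1) := by
  rw [decayProfile_le_succ_iff (hl.trans_le hlj)] at hj
  rw [decayProfile_le_succ_iff hl]
  have hl' : (0 : ℝ) < l := by exact_mod_cast hl
  exact hj.trans (mul_le_mul_of_nonneg_left (antitoneOn_log_sub_log_mul_rpow hp1 hl'
    (hl'.trans_le (by exact_mod_cast hlj)) (by exact_mod_cast hlj)) hp0)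

theorem decayProfile_le_mul (hp0 : 0 ≤ p) (hp1 : p ≤ 1) {C : ℝ}
    (hC : ∀ n, 0 < n → decayProfile p q n ≤ C) {m n : ℕ} (hm : 0 < m) (hmn : m ≤ n) :
    decayProfile p q n ≤ C * decayProfile p q m := by
  have hC1 : 1 ≤ C := decayProfile_one (p := p) (q := q) ▸ hC 1 one_pos
  rcases le_or_le_of_ascents_downward_closed (u := decayProfile p q) (a := 1)
    (fun l j hl hlj => decayProfile_le_succ_of_le hp0 hp1 hl hlj) hm hmn with h | h
  · exact h.trans (le_mul_of_one_le_left (decayProfile_pos hm).le hC1)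
  · rw [decayProfile_one] at h
    exact (hC n (hm.trans_le hmn)).trans (le_mul_of_one_le_right (by linarith) h)

theorem rpow_neg_mul_exp_tail_eq {i n : ℕ} (hin : i < n) :
    ((i : ℝ) + 1) ^ (-p) * exp (-q * ∑ k ∈ Ico (i + 1) n, ((k : ℝ) + 1) ^ (-p)) =
      (n : ℝ) ^ (-p) * (decayProfile p q n / decayProfile p q (i + 1)) := by
  have hn : (0 : ℝ) < n := by exact_mod_cast (i.zero_le.trans_lt hin)
  rw [decayProfile, decayProfile, ← sum_Ico_consecutive _ (by omega : 1 ≤ i + 1) hin,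
    mul_add, exp_add]
  push_cast
  rw [rpow_neg hn.le, rpow_neg (by positivity)]
  field_simp

theorem rpow_neg_mul_exp_tail_le (hp0 : 0 ≤ p) (hp1 : p ≤ 1) {C : ℝ}
    (hC : ∀ n, 0 < n → decayProfile p q n ≤ C) {i n : ℕ} (hin : i < n) :
    ((i : ℝ) + 1) ^ (-p) * exp (-q * ∑ k ∈ Ico (i + 1) n, ((k : ℝ) + 1) ^ (-p)) ≤
      C * (n : ℝ) ^ (-p) := by
  have hC0 : 0 ≤ C := (decayProfile_pos one_pos).le.trans (hC 1 one_pos)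
  rw [rpow_neg_mul_exp_tail_eq hin, mul_comm C]
  gcongr
  exact div_le_of_le_mul₀ (decayProfile_pos i.succ_pos).le hC0
    (decayProfile_le_mul hp0 hp1 hC i.succ_pos hin)

theorem decayProfile_le_sup' {K : ℕ} (hK : 1 ≤ K)
    (hK_decay : ∀ n : ℕ, K ≤ n →
      exp (-q * ∑ k ∈ Ico 1 n, ((k : ℝ) + 1) ^ (-p)) ≤ (n : ℝ) ^ (-p))
    {m : ℕ} (hm : 0 < m) :
    decayProfile p q m ≤ (Icc 1 K).sup' (nonempty_Icc.2 hK) (decayProfile p q) := by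
  rcases le_total m K with hmK | hKm
  · exact le_sup' _ (mem_Icc.2 ⟨hm, hmK⟩)
  · have hm' : (0 : ℝ) < m := by exact_mod_cast hm
    calc decayProfile p q m ≤ (m : ℝ) ^ p * (m : ℝ) ^ (-p) := by
          rw [decayProfile]; gcongr; exact hK_decay m hKm
      _ = decayProfile p q 1 := by rw [← rpow_add hm', decayProfile_one]; simp
      _ ≤ _ := le_sup' _ (mem_Icc.2 ⟨le_rfl, hK⟩)

end DecayProfile

theorem mul_exp_neg_le_one_sub_exp_neg {x q : ℝ} (hx0 : 0 ≤ x) (hxq : x ≤ q) :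
    x * exp (-q) ≤ 1 - exp (-x) := by
  have h := add_one_le_exp x
  have hinv : exp x * exp (-x) = 1 := by rw [← exp_add]; simp
  calc x * exp (-q) ≤ x * exp (-x) := mul_le_mul_of_nonneg_left (exp_le_exp.2 (by linarith)) hx0
    _ ≤ 1 - exp (-x) := by nlinarith [exp_pos (-x)]

theorem sum_mul_exp_neg_tail_le {w : ℕ → ℝ} {q : ℝ} (hq : 0 < q) (hw0 : ∀ k, 0 ≤ w k)
    (hw1 : ∀ k, w k ≤ 1) (n : ℕ) :
    ∑ i ∈ range n, w i * exp (-q * ∑ k ∈ Ico (i + 1) n, w k) ≤ exp q / q := by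
  set F : ℕ → ℝ := fun j => exp (-q * ∑ k ∈ Ico j n, w k)
  have hstep : ∀ i ∈ range n, w i * F (i + 1) ≤ exp q / q * (F (i + 1) - F i) := by
    intro i hi
    have hFi : F i = F (i + 1) * exp (-(q * w i)) := by
      simp only [F, sum_eq_sum_Ico_succ_bot (mem_range.1 hi), ← exp_add]
      ring_nf
    have hexp : exp q * exp (-q) = 1 := by rw [← exp_add]; simp
    have key := mul_exp_neg_le_one_sub_exp_neg (mul_nonneg hq.le (hw0 i))
      (mul_le_of_le_one_right hq.le (hw1 i))
    have hF : 0 < F (i + 1) := exp_pos _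
    rw [hFi, div_mul_eq_mul_div, le_div_iff₀ hq]
    calc w i * F (i + 1) * q = exp q * F (i + 1) * (q * w i * exp (-q)) := by
          linear_combination (-(w i * F (i + 1) * q)) * hexp
      _ ≤ exp q * F (i + 1) * (1 - exp (-(q * w i))) :=
          mul_le_mul_of_nonneg_left key (by positivity)
      _ = exp q * (F (i + 1) - F (i + 1) * exp (-(q * w i))) := by ring
  calc ∑ i ∈ range n, w i * F (i + 1)
      ≤ ∑ i ∈ range n, exp q / q * (F (i + 1) - F i) := sum_le_sum hstep
    _ = exp q / q * (F n - F 0) := by rw [← mul_sum, sum_range_sub]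
    _ ≤ exp q / q * 1 := by
        gcongr
        have : F n = 1 := by simp [F]
        linarith [exp_pos (-q * ∑ k ∈ Ico 0 n, w k)]
    _ = exp q / q := mul_one _

/-- Lemma `an bn upper bounds`.
Let `p ∈ (0,1)` and `q̂ > 0`.  Let `K ≥ 1` be such that
`exp (−q̂ Σ_{k=1}^{n−1} (k+1)^{−p}) ≤ n^{−p}` for all `n ≥ K`, and set
`C := max_{1 ≤ i ≤ K} i^p exp (−q̂ Σ_{k=1}^{i−1} (k+1)^{−p})`.  Then for all `n ≥ 1`,
`c_n := Σ_{i=0}^{n−1} (i+1)^{−2p} exp (−2q̂ Σ_{k=i+1}^{n−1} (k+1)^{−p})`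
satisfies `c_n ≤ (C e^{q̂} / q̂) n^{−p}`. -/
theorem stmt7 (p qh : ℝ) (hp0 : 0 < p) (hp1 : p < 1) (hq : 0 < qh)
    (K : ℕ) (hK : 1 ≤ K)
    (hKprop : ∀ n : ℕ, K ≤ n →
      Real.exp (-qh * ∑ k ∈ Finset.Icc 1 (n - 1), ((k : ℝ) + 1) ^ (-p)) ≤ (n : ℝ) ^ (-p))
    (C : ℝ)
    (hC : C = (Finset.Icc 1 K).sup' (Finset.nonempty_Icc.mpr hK)
      (fun i : ℕ => (i : ℝ) ^ p *
        Real.exp (-qh * ∑ k ∈ Finset.Icc 1 (i - 1), ((k : ℝ) + 1) ^ (-p)))) :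
    ∀ n : ℕ, 1 ≤ n →
      ∑ i ∈ Finset.range n, ((i : ℝ) + 1) ^ (-(2 * p)) *
          Real.exp (-(2 * qh) * ∑ k ∈ Finset.Icc (i + 1) (n - 1), ((k : ℝ) + 1) ^ (-p))
        ≤ C * Real.exp qh / qh * (n : ℝ) ^ (-p) := by
  simp only [Nat.Icc_sub_one_eq_Ico one_pos, Nat.Icc_sub_one_eq_Ico (Nat.succ_pos _)]
    at hKprop hC ⊢
  have hC_bound : ∀ m, 0 < m → decayProfile p qh m ≤ C := fun m hm =>
    hC ▸ decayProfile_le_sup' hK hKprop hm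
  have hC0 : 0 ≤ C := (decayProfile_pos one_pos).le.trans (hC_bound 1 one_pos)
  intro n _
  set x : ℕ → ℝ := fun i =>
    ((i : ℝ) + 1) ^ (-p) * exp (-qh * ∑ k ∈ Ico (i + 1) n, ((k : ℝ) + 1) ^ (-p))
  have hx_le : ∀ i ∈ range n, x i ≤ C * (n : ℝ) ^ (-p) := fun i hi =>
    rpow_neg_mul_exp_tail_le hp0.le hp1.le hC_bound (mem_range.1 hi)
  have hterm : ∀ i : ℕ, ((i : ℝ) + 1) ^ (-(2 * p)) *
      exp (-(2 * qh) * ∑ k ∈ Ico (i + 1) n, ((k : ℝ) + 1) ^ (-p)) = x i * x i := by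
    intro i
    rw [show -(2 * p) = -p + -p by ring, rpow_add (by positivity),
      show ∀ s, -(2 * qh) * s = -qh * s + -qh * s from fun s => by ring, exp_add]
    ring
  have hw1 : ∀ k : ℕ, ((k : ℝ) + 1) ^ (-p) ≤ 1 := fun k =>
    rpow_le_one_of_one_le_of_nonpos (by linarith [k.cast_nonneg (α := ℝ)]) (by linarith)
  calc _ = ∑ i ∈ range n, x i * x i := sum_congr rfl fun i _ => hterm i
    _ ≤ ∑ i ∈ range n, C * (n : ℝ) ^ (-p) * x i :=
        sum_le_sum fun i hi => mul_le_mul_of_nonneg_right (hx_le i hi) (by positivity)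
    _ = C * (n : ℝ) ^ (-p) * ∑ i ∈ range n, x i := (mul_sum _ _ _).symm
    _ ≤ C * (n : ℝ) ^ (-p) * (exp qh / qh) :=
        mul_le_mul_of_nonneg_left (sum_mul_exp_neg_tail_le hq (fun k => by positivity) hw1 n)
          (by positivity)
    _ = C * exp qh / qh * (n : ℝ) ^ (-p) := by ring
end

section
/- Let X ∈ R^{d×d} satisfy λ_min(X + X^⊤) > 0 and set q = λ_min(X + X^⊤)/4. If a stepsize a > 0 satisfies a ≤ (λ_min(X + X^⊤) − 2q)/λ_max(X^⊤X), then ‖I − aX‖ ≤ 1 in the spectral (operator 2-) norm; moreover λ_max(I − a(X + X^⊤) + a² X^⊤X) ≤ e^{−2qa}. -/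
open Matrix
open scoped RealInnerProductSpace

noncomputable section

abbrev E (d : ℕ) := EuclideanSpace ℝ (Fin d)

variable {d : ℕ}

/-- Apply a matrix to a vector of Euclidean space. -/
def app (A : Matrix (Fin d) (Fin d) ℝ) (x : E d) : E d :=
  Matrix.toEuclideanCLM (𝕜 := ℝ) A x

/-- The spectral (operator `2`-) norm of a matrix. -/
def opNorm (A : Matrix (Fin d) (Fin d) ℝ) : ℝ :=
  ‖Matrix.toEuclideanCLM (𝕜 := ℝ) A‖

/-- The smallest eigenvalue of a symmetric matrix, as the infimum of the Rayleigh
quotient over the unit sphere. -/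
def lambdaMin (A : Matrix (Fin d) (Fin d) ℝ) : ℝ :=
  ⨅ x : Metric.sphere (0 : E d) 1, ⟪(x : E d), app A (x : E d)⟫

/-- The largest eigenvalue of a symmetric matrix, as the supremum of the Rayleigh
quotient over the unit sphere. -/
def lambdaMax (A : Matrix (Fin d) (Fin d) ℝ) : ℝ :=
  ⨆ x : Metric.sphere (0 : E d) 1, ⟪(x : E d), app A (x : E d)⟫

namespace Stmt8Aux

lemma sphere_nonempty (hd : 0 < d) : Nonempty (Metric.sphere (0 : E d) 1) := by
  refine ⟨⟨EuclideanSpace.single ⟨0, hd⟩ (1 : ℝ), ?_⟩⟩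
  simp [EuclideanSpace.norm_single]

lemma rayleigh_bdd_above (A : Matrix (Fin d) (Fin d) ℝ) :
    BddAbove (Set.range fun x : Metric.sphere (0 : E d) 1 => ⟪(x : E d), app A (x : E d)⟫) := by
  refine ⟨‖Matrix.toEuclideanCLM (𝕜 := ℝ) A‖, ?_⟩
  rintro _ ⟨x, rfl⟩
  have hx : ‖(x : E d)‖ = 1 := by simpa using x.2
  calc ⟪(x : E d), app A (x : E d)⟫ ≤ ‖(x : E d)‖ * ‖app A (x : E d)‖ := real_inner_le_norm _ _
    _ ≤ ‖(x : E d)‖ * (‖Matrix.toEuclideanCLM (𝕜 := ℝ) A‖ * ‖(x : E d)‖) := by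
        gcongr; exact (Matrix.toEuclideanCLM (𝕜 := ℝ) A).le_opNorm _
    _ = ‖Matrix.toEuclideanCLM (𝕜 := ℝ) A‖ := by rw [hx]; ring

lemma rayleigh_bdd_below (A : Matrix (Fin d) (Fin d) ℝ) :
    BddBelow (Set.range fun x : Metric.sphere (0 : E d) 1 => ⟪(x : E d), app A (x : E d)⟫) := by
  refine ⟨-‖Matrix.toEuclideanCLM (𝕜 := ℝ) A‖, ?_⟩
  rintro _ ⟨x, rfl⟩
  have hx : ‖(x : E d)‖ = 1 := by simpa using x.2
  have h1 : |⟪(x : E d), app A (x : E d)⟫| ≤ ‖(x : E d)‖ * ‖app A (x : E d)‖ :=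
    abs_real_inner_le_norm _ _
  have h2 : ‖app A (x : E d)‖ ≤ ‖Matrix.toEuclideanCLM (𝕜 := ℝ) A‖ * ‖(x : E d)‖ :=
    (Matrix.toEuclideanCLM (𝕜 := ℝ) A).le_opNorm _
  have : |⟪(x : E d), app A (x : E d)⟫| ≤ ‖Matrix.toEuclideanCLM (𝕜 := ℝ) A‖ := by
    calc |⟪(x : E d), app A (x : E d)⟫| ≤ ‖(x : E d)‖ * ‖app A (x : E d)‖ := h1
      _ ≤ ‖(x : E d)‖ * (‖Matrix.toEuclideanCLM (𝕜 := ℝ) A‖ * ‖(x : E d)‖) := by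
          gcongr
      _ = ‖Matrix.toEuclideanCLM (𝕜 := ℝ) A‖ := by rw [hx]; ring
  linarith [neg_abs_le ⟪(x : E d), app A (x : E d)⟫]

lemma lambdaMin_le (A : Matrix (Fin d) (Fin d) ℝ) (x : Metric.sphere (0 : E d) 1) :
    lambdaMin A ≤ ⟪(x : E d), app A (x : E d)⟫ :=
  ciInf_le (rayleigh_bdd_below A) x

lemma le_lambdaMax (A : Matrix (Fin d) (Fin d) ℝ) (x : Metric.sphere (0 : E d) 1) :
    ⟪(x : E d), app A (x : E d)⟫ ≤ lambdaMax A :=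
  le_ciSup (rayleigh_bdd_above A) x

end Stmt8Aux

set_option maxHeartbeats 1000000 in
/-- Lemma `small eigenvalues`.
Let `X` be a `d × d` real matrix with `λ_min (X + Xᵀ) > 0` and set
`q = λ_min (X + Xᵀ)/4`.  If a stepsize `a > 0` satisfies
`a ≤ (λ_min (X + Xᵀ) − 2q) / λ_max (XᵀX)`, then `‖I − aX‖ ≤ 1` in the spectral norm;
moreover `λ_max (I − a(X + Xᵀ) + a² XᵀX) ≤ e^{−2qa}`. -/
theorem stmt8 {d : ℕ} (hd : 0 < d) (X : Matrix (Fin d) (Fin d) ℝ)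
    (hX : 0 < lambdaMin (X + Xᵀ))
    (q : ℝ) (hq : q = lambdaMin (X + Xᵀ) / 4)
    (a : ℝ) (ha : 0 < a)
    (haX : a ≤ (lambdaMin (X + Xᵀ) - 2 * q) / lambdaMax (Xᵀ * X)) :
    opNorm (1 - a • X) ≤ 1 ∧
      lambdaMax (1 - a • (X + Xᵀ) + (a ^ 2) • (Xᵀ * X)) ≤ Real.exp (-(2 * q * a)) := by
  haveI : Nonempty (Metric.sphere (0 : E d) 1) := Stmt8Aux.sphere_nonempty hd
  have hq0 : 0 < q := by rw [hq]; linarith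
  set T : E d →L[ℝ] E d := Matrix.toEuclideanCLM (𝕜 := ℝ) X with hT
  -- transpose goes to adjoint
  have hstar : (Xᵀ : Matrix (Fin d) (Fin d) ℝ) = star X := by
    rw [Matrix.star_eq_conjTranspose, Matrix.conjTranspose_eq_transpose_of_trivial]
  have hTt : Matrix.toEuclideanCLM (𝕜 := ℝ) Xᵀ = ContinuousLinearMap.adjoint T := by
    rw [hstar, map_star, hT, ← ContinuousLinearMap.star_eq_adjoint]
  -- Rayleigh quotient of transpose
  have hinner_t : ∀ x : E d, ⟪x, app Xᵀ x⟫ = ⟪x, app X x⟫ := by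
    intro x
    show ⟪x, Matrix.toEuclideanCLM (𝕜 := ℝ) Xᵀ x⟫ = _
    rw [hTt, ContinuousLinearMap.adjoint_inner_right]
    exact real_inner_comm _ _
  -- key identity on unit vectors
  have key : ∀ x : E d, ‖x‖ = 1 →
      ⟪x, app (1 - a • (X + Xᵀ) + (a ^ 2) • (Xᵀ * X)) x⟫ =
        ‖x - a • app X x‖ ^ 2 := by
    intro x hx
    have h1 : app (1 - a • (X + Xᵀ) + (a ^ 2) • (Xᵀ * X)) x
        = x - a • (app X x + app Xᵀ x) + (a ^ 2) • app Xᵀ (app X x) := by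
      show Matrix.toEuclideanCLM (𝕜 := ℝ) _ x = _
      rw [map_add, map_sub, _root_.map_smul, _root_.map_smul, _root_.map_one, map_add, _root_.map_mul]
      rfl
    have hadj : ⟪x, app Xᵀ (app X x)⟫ = ‖app X x‖ ^ 2 := by
      show ⟪x, Matrix.toEuclideanCLM (𝕜 := ℝ) Xᵀ (app X x)⟫ = _
      rw [hTt, ContinuousLinearMap.adjoint_inner_right]
      have : (T : E d →L[ℝ] E d) x = app X x := rfl
      rw [this, real_inner_comm, real_inner_self_eq_norm_sq]
    have hns : ‖x - a • app X x‖ ^ 2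
        = ‖x‖ ^ 2 - 2 * ⟪x, a • app X x⟫ + ‖a • app X x‖ ^ 2 := by
      rw [← real_inner_self_eq_norm_sq, ← real_inner_self_eq_norm_sq,
        ← real_inner_self_eq_norm_sq]
      simp only [inner_sub_sub_self]
      rw [real_inner_comm (a • app X x) x]
      ring
    rw [h1]
    rw [inner_add_right, inner_sub_right, inner_smul_right, inner_add_right,
      inner_smul_right, hinner_t x, hadj, hns, inner_smul_right,
      norm_smul, real_inner_self_eq_norm_sq, hx]
    simp [mul_pow]
    ring
  -- bound a * lambdaMax (XᵀX) ≤ 2q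
  have hmax0 : 0 ≤ lambdaMax (Xᵀ * X) := by
    obtain ⟨x⟩ := Stmt8Aux.sphere_nonempty (d := d) hd
    refine le_trans ?_ (Stmt8Aux.le_lambdaMax (Xᵀ * X) x)
    have : app (Xᵀ * X) (x : E d) = app Xᵀ (app X (x : E d)) := by
      show Matrix.toEuclideanCLM (𝕜 := ℝ) _ _ = _
      rw [_root_.map_mul]; rfl
    rw [this]
    show (0 : ℝ) ≤ ⟪(x : E d), Matrix.toEuclideanCLM (𝕜 := ℝ) Xᵀ (app X (x : E d))⟫
    rw [hTt, ContinuousLinearMap.adjoint_inner_right]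
    have : (T : E d →L[ℝ] E d) (x : E d) = app X (x : E d) := rfl
    rw [this]
    exact real_inner_self_nonneg
  have hbound : a * lambdaMax (Xᵀ * X) ≤ 2 * q := by
    rcases eq_or_lt_of_le hmax0 with h0 | h0
    · rw [← h0]; nlinarith
    · have := (le_div_iff₀ h0).mp haX
      have hlm : lambdaMin (X + Xᵀ) - 2 * q = 2 * q := by rw [hq]; ring
      linarith
  -- Rayleigh quotient bound for M
  have hM : ∀ x : Metric.sphere (0 : E d) 1,
      ⟪(x : E d), app (1 - a • (X + Xᵀ) + (a ^ 2) • (Xᵀ * X)) (x : E d)⟫ ≤ 1 - 2 * q * a := by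
    intro x
    have hx1 : ‖(x : E d)‖ = 1 := by simpa using x.2
    have hmin := Stmt8Aux.lambdaMin_le (X + Xᵀ) x
    have hmax := Stmt8Aux.le_lambdaMax (Xᵀ * X) x
    have h1 : app (1 - a • (X + Xᵀ) + (a ^ 2) • (Xᵀ * X)) (x : E d)
        = (x : E d) - a • app (X + Xᵀ) (x : E d) + (a ^ 2) • app (Xᵀ * X) (x : E d) := by
      show Matrix.toEuclideanCLM (𝕜 := ℝ) _ _ = _
      rw [map_add, map_sub, _root_.map_smul, _root_.map_smul, _root_.map_one]
      rfl
    rw [h1, inner_add_right, inner_sub_right, inner_smul_right, inner_smul_right,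
      real_inner_self_eq_norm_sq, hx1]
    have h4 : 4 * q ≤ ⟪(x : E d), app (X + Xᵀ) (x : E d)⟫ := by
      rw [hq]; linarith
    nlinarith [ha.le, sq_nonneg a]
  constructor
  · -- operator norm bound
    refine ContinuousLinearMap.opNorm_le_bound _ zero_le_one ?_
    intro x
    rcases eq_or_ne x 0 with rfl | hx0
    · simp
    · have hxn : ‖x‖ ≠ 0 := norm_ne_zero_iff.mpr hx0
      set y : E d := ‖x‖⁻¹ • x with hy
      have hy1 : ‖y‖ = 1 := by
        rw [hy, norm_smul, norm_inv, norm_norm, inv_mul_cancel₀ hxn]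
      have hyx : x = ‖x‖ • y := by
        rw [hy, smul_smul, mul_inv_cancel₀ hxn, one_smul]
      have hMy := hM ⟨y, by simpa using hy1⟩
      have hkey := key y hy1
      have hle : ‖y - a • app X y‖ ^ 2 ≤ 1 := by
        rw [← hkey]
        refine le_trans hMy ?_
        nlinarith
      have hle1 : ‖y - a • app X y‖ ≤ 1 := by
        nlinarith [norm_nonneg (y - a • app X y)]
      have happ : Matrix.toEuclideanCLM (𝕜 := ℝ) (1 - a • X) x
          = ‖x‖ • (y - a • app X y) := by
        show Matrix.toEuclideanCLM (𝕜 := ℝ) (1 - a • X) x = _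
        rw [map_sub, _root_.map_smul, _root_.map_one]
        have : (Matrix.toEuclideanCLM (𝕜 := ℝ) X) x = app X x := rfl
        rw [ContinuousLinearMap.sub_apply, ContinuousLinearMap.smul_apply,
          ContinuousLinearMap.one_apply, this]
        have hxy : ‖x‖ • y = x := by rw [hy, smul_smul, mul_inv_cancel₀ hxn, one_smul]
        have hXx : app X x = ‖x‖ • app X y := by
          rw [← hxy]
          show Matrix.toEuclideanCLM (𝕜 := ℝ) X (‖x‖ • y) = _
          rw [_root_.map_smul, hxy]; rfl
        rw [hXx, smul_sub, hxy, smul_comm]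
      calc ‖Matrix.toEuclideanCLM (𝕜 := ℝ) (1 - a • X) x‖
          = ‖x‖ * ‖y - a • app X y‖ := by rw [happ, norm_smul, norm_norm]
        _ ≤ ‖x‖ * 1 := by gcongr
        _ = 1 * ‖x‖ := by ring
  · -- lambdaMax bound
    refine le_trans (ciSup_le hM) ?_
    have := Real.add_one_le_exp (-(2 * q * a))
    linarith
end
end

section
/- Let X_1 ∈ R^{d×d} have λ_min(X_1 + X_1^⊤) > 0, set q_1 = λ_min(X_1+X_1^⊤)/4, and let α_k = (k+1)^{−α} with α ∈ (0,1). Define K₁ = ⌈(λ_max(X_1^⊤X_1)/(λ_min(X_1+X_1^⊤) − 2q_1))^{1/α}⌉, μ₁ = −λ_min(X_1+X_1^⊤) + λ_max(X_1^⊤X_1), and C_θ = max{1, √(max_{ℓ₁ ≤ ℓ₂ ≤ K₁} ∏_{ℓ=ℓ₁}^{ℓ₂} e^{α_ℓ(μ₁+2q_1)})}. Then for any i ≤ n: ∏_{k=i}^n ‖I − α_k X_1‖ ≤ C_θ e^{−q_1 Σ_{k=i}^n α_k}. The analogous bound ∏_{k=i}^n ‖I − β_k W_2‖ ≤ C_w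 e^{−q_2 Σ_{k=i}^n β_k} holds with W_2, q_2 = λ_min(W_2+W_2^⊤)/4, β_k = (k+1)^{−β}, β ∈ (0,1), and the analogously defined constant C_w. -/
open Matrix
open scoped RealInnerProductSpace BigOperators

noncomputable section

variable {d : ℕ}

/-- Stepsizes `(n+1)^{-a}`. -/
def steps (a : ℝ) (n : ℕ) : ℝ := ((n : ℝ) + 1) ^ (-a)

/-- `max_{ℓ₁ ≤ ℓ₂ ≤ K} ∏_{ℓ=ℓ₁}^{ℓ₂} e^{c α_ℓ}` (pairs violating `ℓ₁ ≤ ℓ₂` are padded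
with `1`, which does not change the final constant `max {1, √(this max)}`). -/
def pairMax (a c : ℝ) (K : ℕ) : ℝ :=
  (Finset.range (K + 1) ×ˢ Finset.range (K + 1)).sup'
    (Finset.nonempty_product.mpr
      ⟨Finset.nonempty_range_iff.mpr (Nat.succ_ne_zero _),
       Finset.nonempty_range_iff.mpr (Nat.succ_ne_zero _)⟩)
    (fun q => if q.1 ≤ q.2 then
        Real.exp (c * ∑ l ∈ Finset.Icc q.1 q.2, steps a l) else 1)

/-!
For a unit vector `x`, `‖(1 - s X) x‖² = 1 - s ⟪x, (X + Xᵀ) x⟫ + s² ‖X x‖²`, so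
`‖1 - s X‖² ≤ 1 - s λ_min(X + Xᵀ) + s² λ_max(XᵀX)`. As `s ≤ 1` and `λ_max(XᵀX) ≥ 0`, this
is at most `1 + s μ`, giving `‖1 - s X‖ ≤ e^{s μ / 2} = e^{s (μ + 2q)/2} e^{-q s}` for every
step. Once `s λ_max(XᵀX) ≤ 2q`, which holds for `k ≥ K` by the choice of `K`, it is at most
`1 - 2 q s`, giving `‖1 - s X‖ ≤ e^{-q s}`. Only the factors with `k < K` carry the extra
`e^{s (μ + 2q)/2}`, and their product is the square root of one of the products in `pairMax`.
-/

lemma abs_inner_app_le_opNorm (A : Matrix (Fin d) (Fin d) ℝ) {x : E d} (hx : ‖x‖ = 1) :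
    |⟪x, app A x⟫| ≤ opNorm A :=
  calc |⟪x, app A x⟫| ≤ ‖x‖ * ‖app A x‖ := abs_real_inner_le_norm _ _
    _ ≤ opNorm A := by
      rw [hx, one_mul]
      exact ((Matrix.toEuclideanCLM (𝕜 := ℝ) A).le_opNorm x).trans_eq (by rw [hx, mul_one]; rfl)

lemma lambdaMin_le_inner_app (A : Matrix (Fin d) (Fin d) ℝ) {x : E d} (hx : ‖x‖ = 1) :
    lambdaMin A ≤ ⟪x, app A x⟫ := by
  unfold lambdaMin
  refine ciInf_le ⟨-opNorm A, ?_⟩ (⟨x, by simp [hx]⟩ : Metric.sphere (0 : E d) 1)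
  rintro _ ⟨z, rfl⟩
  exact neg_le_of_abs_le (abs_inner_app_le_opNorm A (norm_eq_of_mem_sphere z))

lemma inner_app_le_lambdaMax (A : Matrix (Fin d) (Fin d) ℝ) {x : E d} (hx : ‖x‖ = 1) :
    ⟪x, app A x⟫ ≤ lambdaMax A := by
  unfold lambdaMax
  refine le_ciSup (f := fun z : Metric.sphere (0 : E d) 1 => ⟪(z : E d), app A z⟫)
    ⟨opNorm A, ?_⟩ (⟨x, by simp [hx]⟩ : Metric.sphere (0 : E d) 1)
  rintro _ ⟨z, rfl⟩
  exact le_of_abs_le (abs_inner_app_le_opNorm A (norm_eq_of_mem_sphere z))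

lemma inner_app_transpose (A : Matrix (Fin d) (Fin d) ℝ) (x y : E d) :
    ⟪x, app Aᵀ y⟫ = ⟪app A x, y⟫ := by
  have hT : Aᵀ = Aᴴ := (Matrix.conjTranspose_eq_transpose_of_trivial A).symm
  have hstar : Matrix.toEuclideanCLM (𝕜 := ℝ) Aᴴ = star (Matrix.toEuclideanCLM (𝕜 := ℝ) A) := by
    rw [← Matrix.star_eq_conjTranspose, map_star]
  rw [app, hT, hstar, ContinuousLinearMap.star_eq_adjoint,
    ContinuousLinearMap.adjoint_inner_right]
  rfl

lemma inner_app_add_transpose (X : Matrix (Fin d) (Fin d) ℝ) (x : E d) :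
    ⟪x, app (X + Xᵀ) x⟫ = 2 * ⟪x, app X x⟫ := by
  have hadd : app (X + Xᵀ) x = app X x + app Xᵀ x := by simp [app, map_add]
  rw [hadd, inner_add_right, inner_app_transpose, real_inner_comm (app X x) x]
  ring

lemma inner_app_transpose_mul_self (X : Matrix (Fin d) (Fin d) ℝ) (x : E d) :
    ⟪x, app (Xᵀ * X) x⟫ = ‖app X x‖ ^ 2 := by
  have hmul : app (Xᵀ * X) x = app Xᵀ (app X x) := by
    simp only [app]
    rw [_root_.map_mul]
    rfl
  rw [hmul, inner_app_transpose, real_inner_self_eq_norm_sq]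

lemma lambdaMax_transpose_mul_self_nonneg (X : Matrix (Fin d) (Fin d) ℝ) :
    0 ≤ lambdaMax (Xᵀ * X) :=
  Real.iSup_nonneg fun z => by
    rw [inner_app_transpose_mul_self]
    positivity

lemma norm_app_one_sub_smul_sq (X : Matrix (Fin d) (Fin d) ℝ) (s : ℝ) (x : E d) :
    ‖app (1 - s • X) x‖ ^ 2
      = ‖x‖ ^ 2 - s * ⟪x, app (X + Xᵀ) x⟫ + s ^ 2 * ⟪x, app (Xᵀ * X) x⟫ := by
  have happ : app (1 - s • X) x = x - s • app X x := by
    simp [app, map_sub, _root_.map_smul]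
  rw [happ, norm_sub_sq_real, inner_app_add_transpose, inner_app_transpose_mul_self,
    real_inner_smul_right, norm_smul, Real.norm_eq_abs, mul_pow, sq_abs]
  ring

lemma opNorm_one_sub_smul_le_exp (X : Matrix (Fin d) (Fin d) ℝ) {s c : ℝ} (hs : 0 ≤ s)
    (h : 1 - s * lambdaMin (X + Xᵀ) + s ^ 2 * lambdaMax (Xᵀ * X) ≤ 1 + c) :
    opNorm (1 - s • X) ≤ Real.exp (c / 2) := by
  refine ContinuousLinearMap.opNorm_le_of_unit_norm (Real.exp_pos _).le fun x hx => ?_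
  change ‖app (1 - s • X) x‖ ≤ _
  rw [Real.exp_half]
  refine Real.le_sqrt_of_sq_le ?_
  have hmin := lambdaMin_le_inner_app (X + Xᵀ) hx
  have hmax := inner_app_le_lambdaMax (Xᵀ * X) hx
  calc ‖app (1 - s • X) x‖ ^ 2
      = 1 - s * ⟪x, app (X + Xᵀ) x⟫ + s ^ 2 * ⟪x, app (Xᵀ * X) x⟫ := by
        rw [norm_app_one_sub_smul_sq, hx, one_pow]
    _ ≤ 1 - s * lambdaMin (X + Xᵀ) + s ^ 2 * lambdaMax (Xᵀ * X) := by gcongr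
    _ ≤ 1 + c := h
    _ ≤ Real.exp c := by linarith [Real.add_one_le_exp c]

lemma opNorm_one_sub_smul_le_exp_mul (X : Matrix (Fin d) (Fin d) ℝ) {s : ℝ}
    (hs0 : 0 ≤ s) (hs1 : s ≤ 1) :
    opNorm (1 - s • X) ≤
      Real.exp (s * (-lambdaMin (X + Xᵀ) + lambdaMax (Xᵀ * X)) / 2) :=
  opNorm_one_sub_smul_le_exp X hs0 <| by
    nlinarith [mul_nonneg (mul_nonneg hs0 (sub_nonneg.2 hs1))
      (lambdaMax_transpose_mul_self_nonneg X)]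

lemma opNorm_one_sub_smul_le_exp_neg (X : Matrix (Fin d) (Fin d) ℝ) {s : ℝ} (hs : 0 ≤ s)
    (hsM : s * lambdaMax (Xᵀ * X) ≤ lambdaMin (X + Xᵀ) / 2) :
    opNorm (1 - s • X) ≤ Real.exp (-(lambdaMin (X + Xᵀ) / 4) * s) :=
  (opNorm_one_sub_smul_le_exp X (c := -(lambdaMin (X + Xᵀ) / 2 * s)) hs
    (by nlinarith [mul_le_mul_of_nonneg_left hsM hs])).trans_eq (by ring_nf)

lemma steps_pos (a : ℝ) (k : ℕ) : 0 < steps a k := by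
  unfold steps
  positivity

lemma steps_le_one {a : ℝ} (ha : 0 ≤ a) (k : ℕ) : steps a k ≤ 1 :=
  Real.rpow_le_one_of_one_le_of_nonpos (by linarith [k.cast_nonneg (α := ℝ)]) (neg_nonpos.2 ha)

lemma steps_mul_le_of_ceil_le {a M c : ℝ} (ha : 0 < a) (hM : 0 ≤ M) (hc : 0 < c) {k : ℕ}
    (hk : ⌈(M / c) ^ (1 / a)⌉₊ ≤ k) : steps a k * M ≤ c := by
  have hk1 : 0 < (k : ℝ) + 1 := by positivity
  have hroot : (M / c) ^ a⁻¹ ≤ (k : ℝ) + 1 := by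
    rw [← one_div]
    linarith [Nat.ceil_le.1 hk]
  rw [Real.rpow_inv_le_iff_of_pos (by positivity) hk1.le ha, div_le_iff₀ hc] at hroot
  rw [steps, Real.rpow_neg hk1.le, inv_mul_le_iff₀ (by positivity)]
  linarith

lemma exp_mul_sum_Icc_le_pairMax {a c : ℝ} {K i m : ℕ} (him : i ≤ m) (hmK : m ≤ K) :
    Real.exp (c * ∑ l ∈ Finset.Icc i m, steps a l) ≤ pairMax a c K := by
  unfold pairMax
  refine le_trans (le_of_eq ?_) (Finset.le_sup' _ (b := (i, m)) (by simp; omega))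
  simp [him]

lemma exp_mul_sum_Ico_le_max_pairMax {a c : ℝ} {K i m : ℕ} (hmK : m ≤ K + 1) :
    Real.exp (c * ∑ l ∈ Finset.Ico i m, steps a l) ≤ max 1 (pairMax a c K) := by
  rcases lt_or_ge i m with him | hmi
  · have hIco : Finset.Ico i m = Finset.Icc i (m - 1) := by
      ext
      simp only [Finset.mem_Ico, Finset.mem_Icc]
      omega
    rw [hIco]
    exact le_max_of_le_right (exp_mul_sum_Icc_le_pairMax (by omega) (by omega))
  · simp [Finset.Ico_eq_empty_of_le hmi]

lemma prod_le_of_le_exp_steps {a c q : ℝ} {K : ℕ} (f : ℕ → ℝ) (hf0 : ∀ k, 0 ≤ f k)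
    (hf : ∀ k, f k ≤ Real.exp (c * steps a k / 2) * Real.exp (-q * steps a k))
    (hfK : ∀ k, K ≤ k → f k ≤ Real.exp (-q * steps a k)) (i n : ℕ) :
    ∏ k ∈ Finset.Icc i n, f k ≤
      max 1 √(pairMax a c K) * Real.exp (-q * ∑ k ∈ Finset.Icc i n, steps a k) := by
  have hfilter : (Finset.Icc i n).filter (· < K) = Finset.Ico i (min (n + 1) K) := by
    ext
    simp only [Finset.mem_filter, Finset.mem_Icc, Finset.mem_Ico, lt_min_iff]
    omega
  calc ∏ k ∈ Finset.Icc i n, f k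
      ≤ ∏ k ∈ Finset.Icc i n,
          (if k < K then Real.exp (c * steps a k / 2) else 1) * Real.exp (-q * steps a k) := by
        refine Finset.prod_le_prod (fun k _ => hf0 k) fun k _ => ?_
        split_ifs with hk
        · exact hf k
        · rw [one_mul]
          exact hfK k (not_lt.1 hk)
    _ = √(Real.exp (c * ∑ k ∈ Finset.Ico i (min (n + 1) K), steps a k)) *
          Real.exp (-q * ∑ k ∈ Finset.Icc i n, steps a k) := by
        rw [Finset.prod_mul_distrib, Finset.prod_ite, hfilter, Finset.prod_const_one, mul_one,
          ← Real.exp_sum, ← Real.exp_sum, ← Real.exp_half, ← Finset.mul_sum, ← Finset.sum_div,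
          ← Finset.mul_sum]
    _ ≤ √(max 1 (pairMax a c K)) * Real.exp (-q * ∑ k ∈ Finset.Icc i n, steps a k) := by
        gcongr
        exact exp_mul_sum_Ico_le_max_pairMax (by omega)
    _ = max 1 √(pairMax a c K) * Real.exp (-q * ∑ k ∈ Finset.Icc i n, steps a k) := by
        rw [Real.sqrt_monotone.map_max, Real.sqrt_one]

theorem prod_opNorm_one_sub_smul_steps_le (X : Matrix (Fin d) (Fin d) ℝ) {a : ℝ} (ha : 0 < a)
    (hX : 0 < lambdaMin (X + Xᵀ)) (q : ℝ) (hq : q = lambdaMin (X + Xᵀ) / 4) (K : ℕ)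
    (hK : K = ⌈(lambdaMax (Xᵀ * X) / (lambdaMin (X + Xᵀ) - 2 * q)) ^ (1 / a)⌉₊)
    (μ : ℝ) (hμ : μ = -lambdaMin (X + Xᵀ) + lambdaMax (Xᵀ * X)) (i n : ℕ) :
    ∏ k ∈ Finset.Icc i n, opNorm (1 - steps a k • X) ≤
      max 1 √(pairMax a (μ + 2 * q) K) * Real.exp (-q * ∑ k ∈ Finset.Icc i n, steps a k) := by
  subst hq hK hμ
  refine prod_le_of_le_exp_steps _ (fun k => norm_nonneg _) (fun k => ?_) (fun k hk => ?_) i n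
  · rw [← Real.exp_add]
    refine (opNorm_one_sub_smul_le_exp_mul X (steps_pos a k).le
      (steps_le_one ha.le k)).trans_eq ?_
    ring_nf
  · refine opNorm_one_sub_smul_le_exp_neg X (steps_pos a k).le
      (steps_mul_le_of_ceil_le ha (lambdaMax_transpose_mul_self_nonneg X) (by linarith) ?_)
    convert hk using 4
    ring

theorem stmt9_general {d : ℕ} (X1 W2 : Matrix (Fin d) (Fin d) ℝ)
    (α β : ℝ) (hα0 : 0 < α) (hβ0 : 0 < β)
    (hX1 : 0 < lambdaMin (X1 + X1ᵀ)) (hW2 : 0 < lambdaMin (W2 + W2ᵀ))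
    (q1 q2 : ℝ) (hq1 : q1 = lambdaMin (X1 + X1ᵀ) / 4) (hq2 : q2 = lambdaMin (W2 + W2ᵀ) / 4)
    (K1 K2 : ℕ)
    (hK1 : K1 = ⌈(lambdaMax (X1ᵀ * X1) / (lambdaMin (X1 + X1ᵀ) - 2 * q1)) ^ (1 / α)⌉₊)
    (hK2 : K2 = ⌈(lambdaMax (W2ᵀ * W2) / (lambdaMin (W2 + W2ᵀ) - 2 * q2)) ^ (1 / β)⌉₊)
    (μ1 μ2 : ℝ)
    (hμ1 : μ1 = -lambdaMin (X1 + X1ᵀ) + lambdaMax (X1ᵀ * X1))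
    (hμ2 : μ2 = -lambdaMin (W2 + W2ᵀ) + lambdaMax (W2ᵀ * W2))
    (Cθ Cw : ℝ)
    (hCθ : Cθ = max 1 (Real.sqrt (pairMax α (μ1 + 2 * q1) K1)))
    (hCw : Cw = max 1 (Real.sqrt (pairMax β (μ2 + 2 * q2) K2))) :
    (∀ i n : ℕ, i ≤ n →
      ∏ k ∈ Finset.Icc i n, opNorm (1 - steps α k • X1) ≤
        Cθ * Real.exp (-q1 * ∑ k ∈ Finset.Icc i n, steps α k)) ∧
    (∀ i n : ℕ, i ≤ n →
      ∏ k ∈ Finset.Icc i n, opNorm (1 - steps β k • W2) ≤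
        Cw * Real.exp (-q2 * ∑ k ∈ Finset.Icc i n, steps β k)) := by
  subst hCθ hCw
  exact ⟨fun i n _ => prod_opNorm_one_sub_smul_steps_le X1 hα0 hX1 q1 hq1 K1 hK1 μ1 hμ1 i n,
    fun i n _ => prod_opNorm_one_sub_smul_steps_le W2 hβ0 hW2 q2 hq2 K2 hK2 μ2 hμ2 i n⟩

/-- Lemma `Dn bounds`.
Let `X₁` have `λ_min (X₁ + X₁ᵀ) > 0`, `q₁ = λ_min(X₁+X₁ᵀ)/4`, `α_k = (k+1)^{−α}` with
`α ∈ (0,1)`, `K₁ = ⌈(λ_max(X₁ᵀX₁)/(λ_min(X₁+X₁ᵀ) − 2q₁))^{1/α}⌉`,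
`μ₁ = −λ_min(X₁+X₁ᵀ) + λ_max(X₁ᵀX₁)` and
`C_θ = max {1, √(max_{ℓ₁ ≤ ℓ₂ ≤ K₁} ∏_{ℓ=ℓ₁}^{ℓ₂} e^{α_ℓ(μ₁+2q₁)})}`.  Then for any
`i ≤ n`, `∏_{k=i}^n ‖I − α_k X₁‖ ≤ C_θ e^{−q₁ Σ_{k=i}^n α_k}`.  The analogous bound
holds with `W₂`, `q₂ = λ_min(W₂+W₂ᵀ)/4`, `β_k = (k+1)^{−β}`, `β ∈ (0,1)`, and the
analogously defined constant `C_w`. -/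
theorem stmt9 {d : ℕ} (hd : 0 < d) (X1 W2 : Matrix (Fin d) (Fin d) ℝ)
    (α β : ℝ) (hα0 : 0 < α) (hα1 : α < 1) (hβ0 : 0 < β) (hβ1 : β < 1)
    (hX1 : 0 < lambdaMin (X1 + X1ᵀ)) (hW2 : 0 < lambdaMin (W2 + W2ᵀ))
    (q1 q2 : ℝ) (hq1 : q1 = lambdaMin (X1 + X1ᵀ) / 4) (hq2 : q2 = lambdaMin (W2 + W2ᵀ) / 4)
    (K1 K2 : ℕ)
    (hK1 : K1 = ⌈(lambdaMax (X1ᵀ * X1) / (lambdaMin (X1 + X1ᵀ) - 2 * q1)) ^ (1 / α)⌉₊)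
    (hK2 : K2 = ⌈(lambdaMax (W2ᵀ * W2) / (lambdaMin (W2 + W2ᵀ) - 2 * q2)) ^ (1 / β)⌉₊)
    (μ1 μ2 : ℝ)
    (hμ1 : μ1 = -lambdaMin (X1 + X1ᵀ) + lambdaMax (X1ᵀ * X1))
    (hμ2 : μ2 = -lambdaMin (W2 + W2ᵀ) + lambdaMax (W2ᵀ * W2))
    (Cθ Cw : ℝ)
    (hCθ : Cθ = max 1 (Real.sqrt (pairMax α (μ1 + 2 * q1) K1)))
    (hCw : Cw = max 1 (Real.sqrt (pairMax β (μ2 + 2 * q2) K2))) :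
    (∀ i n : ℕ, i ≤ n →
      ∏ k ∈ Finset.Icc i n, opNorm (1 - steps α k • X1) ≤
        Cθ * Real.exp (-q1 * ∑ k ∈ Finset.Icc i n, steps α k)) ∧
    (∀ i n : ℕ, i ≤ n →
      ∏ k ∈ Finset.Icc i n, opNorm (1 - steps β k • W2) ≤
        Cw * Real.exp (-q2 * ∑ k ∈ Finset.Icc i n, steps β k)) :=
  stmt9_general X1 W2 α β hα0 hβ0 hX1 hW2 q1 q2 hq1 hq2 K1 K2 hK1 hK2 μ1 μ2 hμ1 hμ2 Cθ Cw hCθ hCw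
end
end

section
/- Let 1 > α > β > 0, α_n = (n+1)^{−α}, β_n = (n+1)^{−β}, let q_1, q_2 > 0, and let z ∈ [0, 1 − (α − β)]. Define K_α(z) = max{⌈(q_1/(2(α−β+z)))^{1/α}⌉, ⌈(4(α−β+z)/q_1)^{1/(1−α)}⌉} and K_β(z) = max{⌈(q_2/(α−β+z))^{1/β}⌉, ⌈(4(α−β+z)/q_2)^{1/(1−β)}⌉}. Then: (1) for all n ≥ K_α(z), (n+1)^{−z}/(n+2)^{−z} ≤ (α_{n+1}/α_n)(β_n/β_{n+1}) e^{(q_1/2) α_{n+1}}; and (2) for all n ≥ K_β(z), (n+1)^{−z}/(n+2)^{−z} ≤ (α_{n+1}/α_n)(β_n/β_{n+1}) e^{(q_2/2) β_{n+2}}. -/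
/-!
Put `c = α - β + z`, `x = n + 1`, and let `γ`, `w` be `α`, `n + 2` in (1) and `β`, `n + 3` in (2).
The left-hand side divided by the ratio of stepsizes is `(1 + 1/x)^c ≤ exp (c / x)`, so it suffices
that `c / x ≤ (q/2) w^{-γ}`. Since `w ≤ 2x` (for (2) this needs `n ≥ 1`, guaranteed by the first
term of `K_β`) and `2^γ ≤ 2`, this follows from `4c/q ≤ x^{1-γ}`, which is what the second term of
`K_γ` ensures.
-/

noncomputable section

open Real

lemma add_one_div_rpow_le_exp {x c : ℝ} (hx : 0 < x) (hc : 0 ≤ c) :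
    ((x + 1) / x) ^ c ≤ exp (c / x) :=
  calc ((x + 1) / x) ^ c = (1 / x + 1) ^ c := by rw [add_div, div_self hx.ne', one_div, add_comm]
    _ ≤ exp (1 / x) ^ c := rpow_le_rpow (by positivity) (add_one_le_exp _) hc
    _ = exp (c / x) := by rw [← exp_mul]; ring_nf

lemma div_le_half_mul_rpow_neg {c q γ x w : ℝ} (hq : 0 < q) (hγ0 : 0 ≤ γ) (hγ1 : γ ≤ 1)
    (hx : 0 < x) (hw : 0 < w) (hwx : w ≤ 2 * x) (h : 4 * c / q ≤ x ^ (1 - γ)) :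
    c / x ≤ q / 2 * w ^ (-γ) := by
  have hc : c ≤ q / 4 * x ^ (1 - γ) := by rw [div_le_iff₀ hq] at h; linarith
  have hx_rpow : x ^ (1 - γ) / x = x ^ (-γ) := by
    rw [rpow_sub hx, rpow_one, rpow_neg hx.le]; field_simp
  have htwo : 1 / 2 ≤ (2 : ℝ) ^ (-γ) := by
    rw [rpow_neg zero_le_two, one_div]
    gcongr
    simpa using rpow_le_rpow_of_exponent_le one_le_two hγ1
  calc c / x ≤ q / 4 * x ^ (1 - γ) / x := by gcongr
    _ = q / 2 * (1 / 2 * x ^ (-γ)) := by rw [mul_div_assoc, hx_rpow]; ring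
    _ ≤ q / 2 * (2 ^ (-γ) * x ^ (-γ)) := by gcongr
    _ = q / 2 * (2 * x) ^ (-γ) := by rw [mul_rpow zero_le_two hx.le]
    _ ≤ q / 2 * w ^ (-γ) := by gcongr _ * ?_; exact rpow_le_rpow_of_nonpos hw hwx (by linarith)

lemma rpow_neg_div_rpow_neg_eq {x y : ℝ} (hx : 0 < x) (hy : 0 < y) (α β z : ℝ) :
    x ^ (-z) / y ^ (-z) =
      (y ^ (-α) / x ^ (-α)) * (x ^ (-β) / y ^ (-β)) * (y / x) ^ (α - β + z) := by
  have hyx : 0 < y / x := by positivity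
  have hdiv (s : ℝ) : y ^ s / x ^ s = (y / x) ^ s := (div_rpow hy.le hx.le s).symm
  rw [rpow_neg hx.le, rpow_neg hy.le, inv_div_inv, rpow_neg hx.le β, rpow_neg hy.le β, inv_div_inv,
    hdiv, hdiv, hdiv, ← rpow_add hyx, ← rpow_add hyx]
  ring_nf

lemma le_rpow_of_natCeil_rpow_one_div_le {a p : ℝ} {n : ℕ} (ha : 0 ≤ a) (hp : 0 < p)
    (h : ⌈a ^ (1 / p)⌉₊ ≤ n) : a ≤ (n : ℝ) ^ p := by
  rw [← rpow_inv_le_iff_of_pos ha n.cast_nonneg hp, ← one_div]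
  exact (Nat.le_ceil _).trans (by exact_mod_cast h)

lemma rpow_neg_div_rpow_neg_le_of_le_rpow {α β z q γ x w : ℝ} (hc : 0 ≤ α - β + z) (hq : 0 < q)
    (hγ0 : 0 ≤ γ) (hγ1 : γ ≤ 1) (hx : 0 < x) (hw : 0 < w) (hwx : w ≤ 2 * x)
    (h : 4 * (α - β + z) / q ≤ x ^ (1 - γ)) :
    x ^ (-z) / (x + 1) ^ (-z) ≤
      ((x + 1) ^ (-α) / x ^ (-α)) * (x ^ (-β) / (x + 1) ^ (-β)) * exp (q / 2 * w ^ (-γ)) := by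
  rw [rpow_neg_div_rpow_neg_eq hx (by positivity) α β]
  gcongr
  exact (add_one_div_rpow_le_exp hx hc).trans
    (exp_le_exp.2 (div_le_half_mul_rpow_neg hq hγ0 hγ1 hx hw hwx h))

theorem stmt11_general (α β q1 q2 z : ℝ)
    (hβ : 0 < β) (hβα : β < α) (hα : α < 1)
    (hq1 : 0 < q1) (hq2 : 0 < q2)
    (hz0 : 0 ≤ z)
    (Kα Kβ : ℕ)
    (hKα : Kα = max ⌈(q1 / (2 * (α - β + z))) ^ (1 / α)⌉₊
                    ⌈(4 * (α - β + z) / q1) ^ (1 / (1 - α))⌉₊)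
    (hKβ : Kβ = max ⌈(q2 / (α - β + z)) ^ (1 / β)⌉₊
                    ⌈(4 * (α - β + z) / q2) ^ (1 / (1 - β))⌉₊) :
    (∀ n : ℕ, Kα ≤ n →
      ((n : ℝ) + 1) ^ (-z) / ((n : ℝ) + 2) ^ (-z) ≤
        (steps α (n + 1) / steps α n) * (steps β n / steps β (n + 1)) *
          Real.exp (q1 / 2 * steps α (n + 1))) ∧
    (∀ n : ℕ, Kβ ≤ n →
      ((n : ℝ) + 1) ^ (-z) / ((n : ℝ) + 2) ^ (-z) ≤
        (steps α (n + 1) / steps α n) * (steps β n / steps β (n + 1)) *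
          Real.exp (q2 / 2 * steps β (n + 2))) := by
  have hc : 0 < α - β + z := by linarith
  have hn_le {p : ℝ} (hp : 0 < p) (n : ℕ) : (n : ℝ) ^ p ≤ ((n : ℝ) + 1) ^ p :=
    rpow_le_rpow n.cast_nonneg (by linarith) hp.le
  have hsucc (n : ℕ) : (n : ℝ) + 1 + 1 = n + 2 := by ring
  refine ⟨fun n hn => ?_, fun n hn => ?_⟩
  · have hK := le_rpow_of_natCeil_rpow_one_div_le (by positivity) (by linarith)
      ((le_max_right _ _).trans (hKα ▸ hn))
    simp only [steps, Nat.cast_add, Nat.cast_one, ← hsucc]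
    exact rpow_neg_div_rpow_neg_le_of_le_rpow hc.le hq1 (by linarith) hα.le
      (by positivity) (by positivity) (by linarith) (hK.trans (hn_le (by linarith) n))
  · have hn1 : (1 : ℝ) ≤ n := by
      exact_mod_cast (Nat.one_le_ceil_iff.2 (by positivity)).trans
        ((le_max_left _ _).trans (hKβ ▸ hn))
    have hK := le_rpow_of_natCeil_rpow_one_div_le (by positivity) (by linarith)
      ((le_max_right _ _).trans (hKβ ▸ hn))
    simp only [steps, Nat.cast_add, Nat.cast_one, Nat.cast_ofNat, ← hsucc]
    exact rpow_neg_div_rpow_neg_le_of_le_rpow hc.le hq2 hβ.le (by linarith)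
      (by positivity) (by positivity) (by linarith) (hK.trans (hn_le (by linarith) n))

/-- Lemma `conditions for cond 2`.
Let `1 > α > β > 0`, `α_n = (n+1)^{−α}`, `β_n = (n+1)^{−β}`, `q₁, q₂ > 0`, and
`z ∈ [0, 1 − (α − β)]`.  With
`K_α(z) = max {⌈(q₁/(2(α−β+z)))^{1/α}⌉, ⌈(4(α−β+z)/q₁)^{1/(1−α)}⌉}` and
`K_β(z) = max {⌈(q₂/(α−β+z))^{1/β}⌉, ⌈(4(α−β+z)/q₂)^{1/(1−β)}⌉}`:
(1) for all `n ≥ K_α(z)`,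
`(n+1)^{−z}/(n+2)^{−z} ≤ (α_{n+1}/α_n)(β_n/β_{n+1}) e^{(q₁/2) α_{n+1}}`;
(2) for all `n ≥ K_β(z)`,
`(n+1)^{−z}/(n+2)^{−z} ≤ (α_{n+1}/α_n)(β_n/β_{n+1}) e^{(q₂/2) β_{n+2}}`. -/
theorem stmt11 (α β q1 q2 z : ℝ)
    (hβ : 0 < β) (hβα : β < α) (hα : α < 1)
    (hq1 : 0 < q1) (hq2 : 0 < q2)
    (hz0 : 0 ≤ z) (hz1 : z ≤ 1 - (α - β))
    (Kα Kβ : ℕ)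
    (hKα : Kα = max ⌈(q1 / (2 * (α - β + z))) ^ (1 / α)⌉₊
                    ⌈(4 * (α - β + z) / q1) ^ (1 / (1 - α))⌉₊)
    (hKβ : Kβ = max ⌈(q2 / (α - β + z)) ^ (1 / β)⌉₊
                    ⌈(4 * (α - β + z) / q2) ^ (1 / (1 - β))⌉₊) :
    (∀ n : ℕ, Kα ≤ n →
      ((n : ℝ) + 1) ^ (-z) / ((n : ℝ) + 2) ^ (-z) ≤
        (steps α (n + 1) / steps α n) * (steps β n / steps β (n + 1)) *
          Real.exp (q1 / 2 * steps α (n + 1))) ∧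
    (∀ n : ℕ, Kβ ≤ n →
      ((n : ℝ) + 1) ^ (-z) / ((n : ℝ) + 2) ^ (-z) ≤
        (steps α (n + 1) / steps α n) * (steps β n / steps β (n + 1)) *
          Real.exp (q2 / 2 * steps β (n + 2))) :=
  stmt11_general α β q1 q2 z hβ hβα hα hq1 hq2 hz0 Kα Kβ hKα hKβ
end
end
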